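/- arXiv:2210.12057 — 5 statements merged into one kernel-verified Lean document; each statement's English description precedes it below -/
import Mathlib

section
/- Conversely, any nonnegative vector μ ∈ ℝ_+^{X×A} satisfying E^T μ = (1−γ)ν₀ + γ P^T μ is the occupancy measure of the policy π_μ(a|x) = μ(x,a)/Σ_{a'} μ(x,a') (defined arbitrarily where the denominator is zero), i.e., μ = μ^{π_μ}. -/
open Matrix Finset

/-- State-action transition matrix under policy `π`. -/
noncomputable def stepMatrix {X A : Type*} [Fintype X] [Fintype A]
    (P : X → A → X → ℝ) (π : X → A → ℝ) : Matrix (X × A) (X × A) ℝ :=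
  fun z z' => P z.1 z.2 z'.1 * π z'.1 z'.2

/-- Occupancy measure of policy `π` with initial distribution `ν₀`. -/
noncomputable def occupancy {X A : Type*} [Fintype X] [Fintype A] [DecidableEq X] [DecidableEq A]
    (P : X → A → X → ℝ) (π : X → A → ℝ) (ν₀ : X → ℝ) (γ : ℝ) (z : X × A) : ℝ :=
  (1 - γ) * ∑' t : ℕ, γ ^ t * ((fun z' : X × A => ν₀ z'.1 * π z'.1 z'.2) ᵥ* (stepMatrix P π ^ t)) z

/-! With `M = stepMatrix P π` and `c(x, a) = ν₀ x * π x a`, the flow constraint together with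
`μ(x, a) = π(a|x) Σ_{a'} μ(x, a')` is the fixed-point equation `μ (1 - γ M) = (1 - γ) c`.
As `M` is row-stochastic, its `ℓ∞`-operator norm is at most `1`, so `1 - γ M` is inverted by the
Neumann series `Σ_t γ^t M^t`, and `μ = (1 - γ) c Σ_t γ^t M^t` is the occupancy measure of `π`. -/

lemma HasSum.vecMul {ι m n R : Type*} [Fintype m] [NonUnitalNonAssocSemiring R]
    [TopologicalSpace R] [IsTopologicalSemiring R] {f : ι → Matrix m n R} {S : Matrix m n R}
    (hf : HasSum f S) (v : m → R) : HasSum (fun i => v ᵥ* f i) (v ᵥ* S) :=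
  Pi.hasSum.mpr fun j => hasSum_sum fun i _ => (Pi.hasSum.mp (Pi.hasSum.mp hf i) j).mul_left (v i)

namespace Matrix

variable {n : Type*} [Fintype n] [DecidableEq n] {M : Matrix n n ℝ} {γ : ℝ}

section LinftyOpNorm

attribute [local instance] Matrix.linftyOpNormedAddCommGroup Matrix.linftyOpNormedSpace
  Matrix.linftyOpNormedRing Matrix.linftyOpNormedAlgebra

lemma linfty_opNorm_le_one_of_mem_rowStochastic (hM : M ∈ rowStochastic ℝ n) : ‖M‖ ≤ 1 := by
  rw [linfty_opNorm_def, NNReal.coe_le_one]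
  refine Finset.sup_le fun i _ => le_of_eq ?_
  rw [← NNReal.coe_inj]
  push_cast
  simp_rw [Real.norm_of_nonneg (nonneg_of_mem_rowStochastic hM)]
  exact sum_row_of_mem_rowStochastic hM i

lemma linfty_opNorm_smul_lt_one_of_mem_rowStochastic (hM : M ∈ rowStochastic ℝ n)
    (hγ : |γ| < 1) : ‖γ • M‖ < 1 :=
  calc ‖γ • M‖ ≤ |γ| * ‖M‖ := norm_smul_le γ M
    _ ≤ |γ| :=
      mul_le_of_le_one_right (abs_nonneg γ) (linfty_opNorm_le_one_of_mem_rowStochastic hM)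
    _ < 1 := hγ

lemma summable_pow_smul_of_mem_rowStochastic (hM : M ∈ rowStochastic ℝ n) (hγ : |γ| < 1) :
    Summable fun t => (γ • M) ^ t :=
  summable_geometric_of_norm_lt_one (linfty_opNorm_smul_lt_one_of_mem_rowStochastic hM hγ)

lemma one_sub_smul_mul_tsum_pow_of_mem_rowStochastic (hM : M ∈ rowStochastic ℝ n)
    (hγ : |γ| < 1) : (1 - γ • M) * ∑' t, (γ • M) ^ t = 1 :=
  mul_neg_geom_series _ (linfty_opNorm_smul_lt_one_of_mem_rowStochastic hM hγ)

end LinftyOpNorm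

end Matrix

lemma apply_eq_mul_sum_of_eq_div {X A : Type*} [Fintype A] {μ : X × A → ℝ} {π : X → A → ℝ}
    (hμ_nonneg : ∀ z, 0 ≤ μ z)
    (hπμ : ∀ x a, (∑ a', μ (x, a')) ≠ 0 → π x a = μ (x, a) / ∑ a', μ (x, a')) (x : X) (a : A) :
    μ (x, a) = π x a * ∑ a', μ (x, a') := by
  by_cases hx : ∑ a', μ (x, a') = 0
  · rw [hx, mul_zero]
    exact (Finset.sum_eq_zero_iff_of_nonneg fun a' _ => hμ_nonneg (x, a')).mp hx a (mem_univ a)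
  · rw [hπμ x a hx, div_mul_cancel₀ _ hx]

section StepMatrix

variable {X A : Type*} [Fintype X] [Fintype A] (P : X → A → X → ℝ) (π : X → A → ℝ)

lemma stepMatrix_mem_rowStochastic [DecidableEq X] [DecidableEq A]
    (hP_nonneg : ∀ x a x', 0 ≤ P x a x') (hP_sum : ∀ x a, ∑ x', P x a x' = 1)
    (hπ_nonneg : ∀ x a, 0 ≤ π x a) (hπ_sum : ∀ x, ∑ a, π x a = 1) :
    stepMatrix P π ∈ rowStochastic ℝ (X × A) := by
  refine mem_rowStochastic_iff_sum.mpr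
    ⟨fun z z' => mul_nonneg (hP_nonneg _ _ _) (hπ_nonneg _ _), fun z => ?_⟩
  simp only [stepMatrix, Fintype.sum_prod_type, ← Finset.mul_sum, hπ_sum, mul_one, hP_sum]

lemma vecMul_stepMatrix_apply (μ : X × A → ℝ) (x : X) (a : A) :
    (μ ᵥ* stepMatrix P π) (x, a) = π x a * ∑ z : X × A, P z.1 z.2 x * μ z := by
  simp only [vecMul, dotProduct, stepMatrix, Finset.mul_sum]
  exact Finset.sum_congr rfl fun z _ => by ring

lemma vecMul_one_sub_smul_stepMatrix [DecidableEq X] [DecidableEq A] (ν₀ : X → ℝ) (γ : ℝ)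
    (μ : X × A → ℝ)
    (hflow : ∀ x : X, ∑ a, μ (x, a) = (1 - γ) * ν₀ x + γ * ∑ z : X × A, P z.1 z.2 x * μ z)
    (hμπ : ∀ x a, μ (x, a) = π x a * ∑ a', μ (x, a')) :
    μ ᵥ* (1 - γ • stepMatrix P π) = (1 - γ) • fun z : X × A => ν₀ z.1 * π z.1 z.2 := by
  ext ⟨x, a⟩
  rw [vecMul_sub, vecMul_one, vecMul_smul, Pi.sub_apply, Pi.smul_apply, vecMul_stepMatrix_apply,
    hμπ x a, hflow x]
  simp only [Pi.smul_apply, smul_eq_mul]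
  ring

lemma occupancy_eq_vecMul_tsum [DecidableEq X] [DecidableEq A] (ν₀ : X → ℝ) (γ : ℝ)
    (hsum : Summable fun t => (γ • stepMatrix P π) ^ t) :
    occupancy P π ν₀ γ =
      (1 - γ) • ((fun z : X × A => ν₀ z.1 * π z.1 z.2) ᵥ* ∑' t, (γ • stepMatrix P π) ^ t) := by
  obtain ⟨S, hS⟩ := hsum
  ext z
  have h := Pi.hasSum.mp (hS.vecMul fun z : X × A => ν₀ z.1 * π z.1 z.2) z
  simp only [smul_pow, vecMul_smul, Pi.smul_apply, smul_eq_mul] at h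
  rw [occupancy, h.tsum_eq, hS.tsum_eq, Pi.smul_apply, smul_eq_mul]

end StepMatrix

theorem stmt8_general {X A : Type*} [Fintype X] [Fintype A] [DecidableEq X] [DecidableEq A]
    (P : X → A → X → ℝ) (ν₀ : X → ℝ) (γ : ℝ)
    (hγ : γ ∈ Set.Ioo (0 : ℝ) 1)
    (hP_nonneg : ∀ x a x', 0 ≤ P x a x') (hP_sum : ∀ x a, ∑ x', P x a x' = 1)
    (μ : X × A → ℝ) (hμ_nonneg : ∀ z, 0 ≤ μ z)
    (hflow : ∀ x : X, ∑ a, μ (x, a)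
        = (1 - γ) * ν₀ x + γ * ∑ z : X × A, P z.1 z.2 x * μ z)
    (π : X → A → ℝ)
    (hπ_nonneg : ∀ x a, 0 ≤ π x a) (hπ_sum : ∀ x, ∑ a, π x a = 1)
    (hπμ : ∀ x a, (∑ a', μ (x, a')) ≠ 0 → π x a = μ (x, a) / ∑ a', μ (x, a')) :
    μ = occupancy P π ν₀ γ := by
  have hM := stepMatrix_mem_rowStochastic P π hP_nonneg hP_sum hπ_nonneg hπ_sum
  have hγ_abs : |γ| < 1 := abs_lt.mpr ⟨by linarith [hγ.1], hγ.2⟩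
  set N := γ • stepMatrix P π
  calc μ = μ ᵥ* ((1 - N) * ∑' t, N ^ t) := by
        rw [one_sub_smul_mul_tsum_pow_of_mem_rowStochastic hM hγ_abs, vecMul_one]
    _ = (μ ᵥ* (1 - N)) ᵥ* ∑' t, N ^ t := (vecMul_vecMul _ _ _).symm
    _ = occupancy P π ν₀ γ := by
        rw [vecMul_one_sub_smul_stepMatrix P π ν₀ γ μ hflow
            (apply_eq_mul_sum_of_eq_div hμ_nonneg hπμ),
          occupancy_eq_vecMul_tsum P π ν₀ γ (summable_pow_smul_of_mem_rowStochastic hM hγ_abs),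
          smul_vecMul]

/-- Any nonnegative vector `μ` satisfying the flow constraint
`E^T μ = (1−γ)ν₀ + γP^T μ` is the occupancy measure of the policy
`π_μ(a|x) = μ(x,a)/Σ_{a'} μ(x,a')` (defined arbitrarily where the
denominator is zero). -/
theorem stmt8 {X A : Type*} [Fintype X] [Fintype A] [DecidableEq X] [DecidableEq A]
    (P : X → A → X → ℝ) (ν₀ : X → ℝ) (γ : ℝ)
    (hγ : γ ∈ Set.Ioo (0 : ℝ) 1)
    (hP_nonneg : ∀ x a x', 0 ≤ P x a x') (hP_sum : ∀ x a, ∑ x', P x a x' = 1)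
    (hν₀_nonneg : ∀ x, 0 ≤ ν₀ x) (hν₀_sum : ∑ x, ν₀ x = 1)
    (μ : X × A → ℝ) (hμ_nonneg : ∀ z, 0 ≤ μ z)
    (hflow : ∀ x : X, ∑ a, μ (x, a)
        = (1 - γ) * ν₀ x + γ * ∑ z : X × A, P z.1 z.2 x * μ z)
    (π : X → A → ℝ)
    (hπ_nonneg : ∀ x a, 0 ≤ π x a) (hπ_sum : ∀ x, ∑ a, π x a = 1)
    (hπμ : ∀ x a, (∑ a', μ (x, a')) ≠ 0 → π x a = μ (x, a) / ∑ a', μ (x, a')) :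
    μ = occupancy P π ν₀ γ :=
  stmt8_general P ν₀ γ hγ hP_nonneg hP_sum μ hμ_nonneg hflow π hπ_nonneg hπ_sum hπμ
end

section
/- Suppose the MDP is linear (P = ΦW, r = Φϑ for feature matrix Φ ∈ ℝ^{XA×d}) and the core state-action assumption holds exactly (Φ = BUΦ with B, U row-stochastic). Then for any feasible pair (λ, u) of the relaxed primal LP — i.e., λ ∈ ℝ_+^m, u ∈ ℝ_+^{XA}, E^T u = (1−γ)ν₀ + γ P^T U^T λ, and Φ^T U^T λ = Φ^T u — the vector u is a valid occupancy measure, i.e., E^T u = (1−γ)ν₀ + γ P^T u. -/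
open Matrix

theorem Matrix.transpose_mul_mulVec_congr {ι κ ν R : Type*} [Fintype ι] [Fintype κ]
    [CommSemiring R] (Φ : Matrix ι κ R) (W : Matrix κ ν R) {v w : ι → R}
    (h : Φᵀ *ᵥ v = Φᵀ *ᵥ w) : (Φ * W)ᵀ *ᵥ v = (Φ * W)ᵀ *ᵥ w := by
  rw [transpose_mul, ← mulVec_mulVec, ← mulVec_mulVec, h]

theorem stmt10_general {X A : Type*} [Fintype X] [Fintype A] {dd m : ℕ}
    (Φ : Matrix (X × A) (Fin dd) ℝ)
    (U : Matrix (Fin m) (X × A) ℝ)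
    (Pm : Matrix (X × A) X ℝ) (W : Matrix (Fin dd) X ℝ) (hlin : Pm = Φ * W)
    (γ : ℝ)
    (ν₀ : X → ℝ)
    (lam : Fin m → ℝ) (u : X × A → ℝ)
    (hflow : ∀ x, ∑ a, u (x, a) = (1 - γ) * ν₀ x + γ * (Pmᵀ *ᵥ (Uᵀ *ᵥ lam)) x)
    (hmatch : Φᵀ *ᵥ (Uᵀ *ᵥ lam) = Φᵀ *ᵥ u) :
    ∀ x, ∑ a, u (x, a) = (1 - γ) * ν₀ x + γ * (Pmᵀ *ᵥ u) x := by
  subst hlin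
  rw [← transpose_mul_mulVec_congr Φ W hmatch]
  exact hflow

/-- Under the linear MDP assumption (`P = ΦW`) and the exact core assumption
(`Φ = BUΦ`), any feasible pair `(λ, u)` of the relaxed primal LP has `u`
satisfying the occupancy-measure flow constraint
`E^T u = (1−γ)ν₀ + γP^T u`. -/
theorem stmt10 {X A : Type*} [Fintype X] [Fintype A] {dd m : ℕ}
    (Φ : Matrix (X × A) (Fin dd) ℝ)
    (U : Matrix (Fin m) (X × A) ℝ) (B : Matrix (X × A) (Fin m) ℝ)
    (hU_nonneg : ∀ i z, 0 ≤ U i z) (hU_sum : ∀ i, ∑ z, U i z = 1)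
    (hB_nonneg : ∀ z i, 0 ≤ B z i) (hB_sum : ∀ z, ∑ i, B z i = 1)
    (hcore : B * U * Φ = Φ)
    (Pm : Matrix (X × A) X ℝ) (W : Matrix (Fin dd) X ℝ) (hlin : Pm = Φ * W)
    (ϑ : Fin dd → ℝ) (r : X × A → ℝ) (hr : r = Φ *ᵥ ϑ)
    (γ : ℝ) (hγ : γ ∈ Set.Ioo (0 : ℝ) 1)
    (ν₀ : X → ℝ)
    (lam : Fin m → ℝ) (u : X × A → ℝ)
    (hlam_nonneg : ∀ i, 0 ≤ lam i) (hu_nonneg : ∀ z, 0 ≤ u z)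
    (hflow : ∀ x, ∑ a, u (x, a) = (1 - γ) * ν₀ x + γ * (Pmᵀ *ᵥ (Uᵀ *ᵥ lam)) x)
    (hmatch : Φᵀ *ᵥ (Uᵀ *ᵥ lam) = Φᵀ *ᵥ u) :
    ∀ x, ∑ a, u (x, a) = (1 - γ) * ν₀ x + γ * (Pmᵀ *ᵥ u) x :=
  stmt10_general Φ U Pm W hlin γ ν₀ lam u hflow hmatch
end

section
/- Under the exact core assumption Φ = BUΦ and linear rewards r = Φϑ, any occupancy measure μ ∈ M extends to a feasible point of the relaxed primal LP by setting λ = B^T μ, and the objectives agree: ⟨B^T μ, U r⟩ = ⟨μ, r⟩. Consequently the optimal value of the relaxed LP equals the optimal return max_{μ ∈ M} ⟨μ, r⟩ and is attained by (B^T μ*, μ*) for an optimal occupancy measure μ*. -/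
open Matrix Finset

/-!
Under `Φ = BUΦ` the map `μ ↦ Uᵀ Bᵀ μ` leaves `Φᵀ μ` unchanged, and in a linear MDP both the
transition term `Pᵀ μ = Wᵀ Φᵀ μ` and the return `⟨μ, Φ ϑ⟩ = ⟨Φᵀ μ, ϑ⟩` see `μ` only through
`Φᵀ μ`. Hence `(Bᵀ μ, μ)` is feasible for the relaxed LP with the same objective. Conversely,
for a relaxed feasible `(λ, u)` the constraint `Φᵀ Uᵀ λ = Φᵀ u` makes `u` an occupancy measure,
and `⟨λ, U r⟩ = ⟨Uᵀ λ, r⟩ = ⟨u, r⟩ ≤ ⟨μ*, r⟩`.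
-/

namespace Matrix

lemma mulVec_nonneg {n o R : Type*} [Fintype n] [Semiring R] [PartialOrder R] [IsOrderedRing R]
    {A : Matrix o n R} {v : n → R} (hA : ∀ i j, 0 ≤ A i j) (hv : ∀ j, 0 ≤ v j) (i : o) :
    0 ≤ (A *ᵥ v) i :=
  dotProduct_nonneg_of_nonneg (hA i) hv

variable {ι κ n o R : Type*} [Fintype ι] [Fintype κ] [CommSemiring R]

lemma transpose_mulVec_mulVec_mulVec_of_mul_mul_eq {Φ : Matrix ι n R} {U : Matrix κ ι R}
    {B : Matrix ι κ R} (hcore : B * U * Φ = Φ) (v : ι → R) :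
    Φᵀ *ᵥ (Uᵀ *ᵥ (Bᵀ *ᵥ v)) = Φᵀ *ᵥ v := by
  rw [mulVec_mulVec, mulVec_mulVec, ← transpose_mul, ← transpose_mul, ← Matrix.mul_assoc, hcore]

lemma transpose_mul_mulVec_congr_s11 [Fintype n] {Φ : Matrix ι n R} (W : Matrix n o R) {x y : ι → R}
    (h : Φᵀ *ᵥ x = Φᵀ *ᵥ y) : (Φ * W)ᵀ *ᵥ x = (Φ * W)ᵀ *ᵥ y := by
  rw [transpose_mul, ← mulVec_mulVec, h, mulVec_mulVec]

lemma dotProduct_mulVec_congr [Fintype n] {Φ : Matrix ι n R} (ϑ : n → R) {x y : ι → R}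
    (h : Φᵀ *ᵥ x = Φᵀ *ᵥ y) : x ⬝ᵥ Φ *ᵥ ϑ = y ⬝ᵥ Φ *ᵥ ϑ := by
  rw [← dotProduct_transpose_mulVec, h, dotProduct_transpose_mulVec]

lemma transpose_mulVec_dotProduct_mulVec_mulVec_of_mul_mul_eq [Fintype n] {Φ : Matrix ι n R}
    {U : Matrix κ ι R} {B : Matrix ι κ R} (hcore : B * U * Φ = Φ) (ϑ : n → R) (v : ι → R) :
    (Bᵀ *ᵥ v) ⬝ᵥ U *ᵥ Φ *ᵥ ϑ = v ⬝ᵥ Φ *ᵥ ϑ := by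
  rw [dotProduct_mulVec, ← mulVec_transpose]
  exact dotProduct_mulVec_congr ϑ (transpose_mulVec_mulVec_mulVec_of_mul_mul_eq hcore v)

end Matrix

theorem stmt11_general {X A : Type*} [Fintype X] [Fintype A] {dd m : ℕ}
    (Φ : Matrix (X × A) (Fin dd) ℝ)
    (U : Matrix (Fin m) (X × A) ℝ) (B : Matrix (X × A) (Fin m) ℝ)
    (hB_nonneg : ∀ z i, 0 ≤ B z i)
    (hcore : B * U * Φ = Φ)
    (Pm : Matrix (X × A) X ℝ) (W : Matrix (Fin dd) X ℝ) (hlin : Pm = Φ * W)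
    (ϑ : Fin dd → ℝ) (r : X × A → ℝ) (hr : r = Φ *ᵥ ϑ)
    (γ : ℝ)
    (ν₀ : X → ℝ)
    -- μ* is an optimal occupancy measure
    (μstar : X × A → ℝ)
    (hμstar_opt : ∀ μ : X × A → ℝ, (∀ z, 0 ≤ μ z) →
      (∀ x, ∑ a, μ (x, a) = (1 - γ) * ν₀ x + γ * (Pmᵀ *ᵥ μ) x) →
      μ ⬝ᵥ r ≤ μstar ⬝ᵥ r) :
    -- every occupancy measure yields a feasible point with the same objective
    (∀ μ : X × A → ℝ, (∀ z, 0 ≤ μ z) →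
      (∀ x, ∑ a, μ (x, a) = (1 - γ) * ν₀ x + γ * (Pmᵀ *ᵥ μ) x) →
      (∀ i, 0 ≤ (Bᵀ *ᵥ μ) i) ∧
      (∀ x, ∑ a, μ (x, a) = (1 - γ) * ν₀ x + γ * (Pmᵀ *ᵥ (Uᵀ *ᵥ (Bᵀ *ᵥ μ))) x) ∧
      (Φᵀ *ᵥ (Uᵀ *ᵥ (Bᵀ *ᵥ μ)) = Φᵀ *ᵥ μ) ∧
      ((Bᵀ *ᵥ μ) ⬝ᵥ (U *ᵥ r) = μ ⬝ᵥ r)) ∧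
    -- every feasible point of the relaxed LP has objective at most the optimal return
    (∀ (lam : Fin m → ℝ) (u : X × A → ℝ), (∀ i, 0 ≤ lam i) → (∀ z, 0 ≤ u z) →
      (∀ x, ∑ a, u (x, a) = (1 - γ) * ν₀ x + γ * (Pmᵀ *ᵥ (Uᵀ *ᵥ lam)) x) →
      (Φᵀ *ᵥ (Uᵀ *ᵥ lam) = Φᵀ *ᵥ u) →
      lam ⬝ᵥ (U *ᵥ r) ≤ μstar ⬝ᵥ r) ∧
    -- the optimum is attained at (B^T μ*, μ*)
    ((Bᵀ *ᵥ μstar) ⬝ᵥ (U *ᵥ r) = μstar ⬝ᵥ r) := by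
  subst hlin hr
  have hfeature := transpose_mulVec_mulVec_mulVec_of_mul_mul_eq hcore
  have hobjective := transpose_mulVec_dotProduct_mulVec_mulVec_of_mul_mul_eq hcore ϑ
  refine ⟨fun μ hμ hflow => ⟨mulVec_nonneg (fun i z => hB_nonneg z i) hμ, fun x => ?_,
    hfeature μ, hobjective μ⟩, fun lam u _ hu hflow hΦ => ?_, hobjective μstar⟩
  · rw [transpose_mul_mulVec_congr_s11 W (hfeature μ)]
    exact hflow x
  · have hu_occupancy : ∀ x, ∑ a, u (x, a) = (1 - γ) * ν₀ x + γ * ((Φ * W)ᵀ *ᵥ u) x := by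
      simpa only [transpose_mul_mulVec_congr_s11 W hΦ] using hflow
    calc lam ⬝ᵥ U *ᵥ Φ *ᵥ ϑ = (Uᵀ *ᵥ lam) ⬝ᵥ Φ *ᵥ ϑ := by rw [dotProduct_mulVec, mulVec_transpose]
      _ = u ⬝ᵥ Φ *ᵥ ϑ := dotProduct_mulVec_congr ϑ hΦ
      _ ≤ μstar ⬝ᵥ Φ *ᵥ ϑ := hμstar_opt u hu hu_occupancy

/-- Under the exact core assumption `Φ = BUΦ` and the linear MDP assumption,
any occupancy measure `μ` extends to a feasible point `(B^T μ, μ)` of the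
relaxed primal LP with matching objective `⟨B^T μ, Ur⟩ = ⟨μ, r⟩`; consequently
the optimal value of the relaxed LP equals the optimal return and is attained
at `(B^T μ*, μ*)`. -/
theorem stmt11 {X A : Type*} [Fintype X] [Fintype A] {dd m : ℕ}
    (Φ : Matrix (X × A) (Fin dd) ℝ)
    (U : Matrix (Fin m) (X × A) ℝ) (B : Matrix (X × A) (Fin m) ℝ)
    (hU_nonneg : ∀ i z, 0 ≤ U i z) (hU_sum : ∀ i, ∑ z, U i z = 1)
    (hB_nonneg : ∀ z i, 0 ≤ B z i) (hB_sum : ∀ z, ∑ i, B z i = 1)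
    (hcore : B * U * Φ = Φ)
    (Pm : Matrix (X × A) X ℝ) (W : Matrix (Fin dd) X ℝ) (hlin : Pm = Φ * W)
    (ϑ : Fin dd → ℝ) (r : X × A → ℝ) (hr : r = Φ *ᵥ ϑ)
    (γ : ℝ) (hγ : γ ∈ Set.Ioo (0 : ℝ) 1)
    (ν₀ : X → ℝ)
    -- μ* is an optimal occupancy measure
    (μstar : X × A → ℝ) (hμstar_nonneg : ∀ z, 0 ≤ μstar z)
    (hμstar_flow : ∀ x, ∑ a, μstar (x, a) = (1 - γ) * ν₀ x + γ * (Pmᵀ *ᵥ μstar) x)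
    (hμstar_opt : ∀ μ : X × A → ℝ, (∀ z, 0 ≤ μ z) →
      (∀ x, ∑ a, μ (x, a) = (1 - γ) * ν₀ x + γ * (Pmᵀ *ᵥ μ) x) →
      μ ⬝ᵥ r ≤ μstar ⬝ᵥ r) :
    -- every occupancy measure yields a feasible point with the same objective
    (∀ μ : X × A → ℝ, (∀ z, 0 ≤ μ z) →
      (∀ x, ∑ a, μ (x, a) = (1 - γ) * ν₀ x + γ * (Pmᵀ *ᵥ μ) x) →
      (∀ i, 0 ≤ (Bᵀ *ᵥ μ) i) ∧
      (∀ x, ∑ a, μ (x, a) = (1 - γ) * ν₀ x + γ * (Pmᵀ *ᵥ (Uᵀ *ᵥ (Bᵀ *ᵥ μ))) x) ∧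
      (Φᵀ *ᵥ (Uᵀ *ᵥ (Bᵀ *ᵥ μ)) = Φᵀ *ᵥ μ) ∧
      ((Bᵀ *ᵥ μ) ⬝ᵥ (U *ᵥ r) = μ ⬝ᵥ r)) ∧
    -- every feasible point of the relaxed LP has objective at most the optimal return
    (∀ (lam : Fin m → ℝ) (u : X × A → ℝ), (∀ i, 0 ≤ lam i) → (∀ z, 0 ≤ u z) →
      (∀ x, ∑ a, u (x, a) = (1 - γ) * ν₀ x + γ * (Pmᵀ *ᵥ (Uᵀ *ᵥ lam)) x) →
      (Φᵀ *ᵥ (Uᵀ *ᵥ lam) = Φᵀ *ᵥ u) →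
      lam ⬝ᵥ (U *ᵥ r) ≤ μstar ⬝ᵥ r) ∧
    -- the optimum is attained at (B^T μ*, μ*)
    ((Bᵀ *ᵥ μstar) ⬝ᵥ (U *ᵥ r) = μstar ⬝ᵥ r) :=
  stmt11_general Φ U B hB_nonneg hcore Pm W hlin ϑ r hr γ ν₀ μstar hμstar_opt
end

section
/- Under the exact core and linear MDP assumptions, any feasible point (V, θ) of the relaxed dual LP — EV ≥ Φθ and U Φθ ≥ U(r + γPV) — satisfies V ≥ V* and Φθ ≥ Q*. In particular (V*, θ*) with Q* = Φθ* is optimal for the relaxed dual LP. -/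
/-!
The exact core assumption `B U Φ = Φ` makes `B U` act as the identity on the span of `Φ`, and the
Bellman backup `r + γ P V` of a linear MDP lies in that span. So the relaxed constraint
`U Φθ ≥ U (r + γ P V)` can be multiplied by the nonnegative matrix `B` to recover the unrelaxed
`Φθ ≥ r + γ P V`. Together with `EV ≥ Φθ`, this makes `V` a supersolution of the Bellman optimality
equation, and a supersolution dominates `V*`: at a state maximizing `V* - V` the gap is at most
`γ` times itself.
-/

open Matrix Finset

section Ordered

variable {R : Type*} [CommRing R] [PartialOrder R] [IsOrderedRing R] {ι κ μ : Type*} [Fintype κ]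

lemma Matrix.mulVec_mono_of_nonneg {M : Matrix ι κ R} (hM : ∀ i j, 0 ≤ M i j) {u v : κ → R}
    (huv : u ≤ v) : M *ᵥ u ≤ M *ᵥ v :=
  fun i => dotProduct_le_dotProduct_of_nonneg_left huv (hM i)

lemma Matrix.mulVec_apply_le_of_stochastic {M : Matrix ι κ R} (hM : ∀ i j, 0 ≤ M i j)
    (hM1 : ∀ i, ∑ j, M i j = 1) {v : κ → R} {c : R} (hv : ∀ j, v j ≤ c) (i : ι) :
    (M *ᵥ v) i ≤ c :=
  calc (M *ᵥ v) i ≤ (M *ᵥ fun _ => c) i := mulVec_mono_of_nonneg hM hv i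
    _ = c := by simp only [mulVec, dotProduct, ← sum_mul, hM1, one_mul]

lemma Matrix.mulVec_le_mulVec_of_exact_core [Fintype ι] [Fintype μ] {B : Matrix ι μ R}
    {U : Matrix μ ι R} {Φ : Matrix ι κ R} (hB : ∀ z i, 0 ≤ B z i) (hcore : B * U * Φ = Φ)
    {a b : κ → R} (h : U *ᵥ (Φ *ᵥ a) ≤ U *ᵥ (Φ *ᵥ b)) : Φ *ᵥ a ≤ Φ *ᵥ b := by
  have hfix : ∀ c, B *ᵥ (U *ᵥ (Φ *ᵥ c)) = Φ *ᵥ c := fun c => by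
    rw [mulVec_mulVec, mulVec_mulVec, hcore]
  simpa only [hfix] using mulVec_mono_of_nonneg hB h

end Ordered

section MDP

variable {R X A : Type*} [Fintype X]

lemma linearMDP_backup_eq_mulVec [CommRing R] {d : Type*} [Fintype d] {Φ : Matrix (X × A) d R}
    {P : Matrix (X × A) X R} {W : Matrix d X R} (hP : P = Φ * W) {ϑ : d → R} {r : X × A → R}
    (hr : r = Φ *ᵥ ϑ) (γ : R) (V : X → R) :
    (fun z => r z + γ * (P *ᵥ V) z) = Φ *ᵥ (ϑ + γ • (W *ᵥ V)) := by
  rw [mulVec_add, mulVec_smul, mulVec_mulVec, ← hP, ← hr]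
  rfl

theorem le_of_bellman_supersolution [Field R] [LinearOrder R] [IsStrictOrderedRing R]
    [Fintype A] [Nonempty A] {P : Matrix (X × A) X R} (hP : ∀ z x, 0 ≤ P z x)
    (hP1 : ∀ z, ∑ x, P z x = 1) {r : X × A → R} {γ : R} (hγ0 : 0 ≤ γ) (hγ1 : γ < 1)
    {Vstar : X → R} {Qstar : X × A → R} (hQ : ∀ z, Qstar z = r z + γ * (P *ᵥ Vstar) z)
    (hV : ∀ x, Vstar x = univ.sup' univ_nonempty fun a => Qstar (x, a))
    {V : X → R} (hsuper : ∀ z, r z + γ * (P *ᵥ V) z ≤ V z.1) : Vstar ≤ V := by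
  intro x
  obtain ⟨y, -, hy⟩ :=
    exists_max_image univ (fun x => Vstar x - V x) ⟨x, mem_univ x⟩
  have hcontract : Vstar y ≤ γ * (Vstar y - V y) + V y := by
    refine (hV y).trans_le (sup'_le _ _ fun a _ => ?_)
    have hgap : (P *ᵥ Vstar) (y, a) - (P *ᵥ V) (y, a) ≤ Vstar y - V y := by
      rw [← Pi.sub_apply, ← mulVec_sub]
      exact mulVec_apply_le_of_stochastic hP hP1 (fun x' => hy x' (mem_univ x')) _
    rw [hQ]
    linarith [hsuper (y, a), mul_le_mul_of_nonneg_left hgap hγ0]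
  have hgap_nonpos : Vstar y - V y ≤ 0 := by nlinarith
  linarith [hy x (mem_univ x)]

end MDP

theorem stmt12_general {X A : Type*} [Fintype X] [Fintype A] [Nonempty A] {dd m : ℕ}
    (Φ : Matrix (X × A) (Fin dd) ℝ)
    (U : Matrix (Fin m) (X × A) ℝ) (B : Matrix (X × A) (Fin m) ℝ)
    (hB_nonneg : ∀ z i, 0 ≤ B z i)
    (hcore : B * U * Φ = Φ)
    (Pm : Matrix (X × A) X ℝ) (W : Matrix (Fin dd) X ℝ) (hlin : Pm = Φ * W)
    (hPm_nonneg : ∀ z x', 0 ≤ Pm z x') (hPm_sum : ∀ z, ∑ x', Pm z x' = 1)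
    (ϑ : Fin dd → ℝ) (r : X × A → ℝ) (hr : r = Φ *ᵥ ϑ)
    (γ : ℝ) (hγ : γ ∈ Set.Ioo (0 : ℝ) 1)
    (ν₀ : X → ℝ) (hν₀_nonneg : ∀ x, 0 ≤ ν₀ x)
    -- the optimal value functions, as fixed points of the Bellman optimality equations
    (Vstar : X → ℝ) (Qstar : X × A → ℝ)
    (hQstar : ∀ z, Qstar z = r z + γ * (Pm *ᵥ Vstar) z)
    (hVstar : ∀ x, Vstar x = Finset.univ.sup' Finset.univ_nonempty (fun a => Qstar (x, a)))
    (θstar : Fin dd → ℝ) (hθstar : Φ *ᵥ θstar = Qstar)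
    -- a feasible point (V, θ) of the relaxed dual LP
    (V : X → ℝ) (θ : Fin dd → ℝ)
    (hfeas1 : ∀ z : X × A, (Φ *ᵥ θ) z ≤ V z.1)
    (hfeas2 : ∀ i, (U *ᵥ fun z => r z + γ * (Pm *ᵥ V) z) i ≤ (U *ᵥ (Φ *ᵥ θ)) i) :
    (∀ x, Vstar x ≤ V x) ∧
    (∀ z, Qstar z ≤ (Φ *ᵥ θ) z) ∧
    -- (V*, θ*) is feasible
    ((∀ z : X × A, (Φ *ᵥ θstar) z ≤ Vstar z.1) ∧
      (∀ i, (U *ᵥ fun z => r z + γ * (Pm *ᵥ Vstar) z) i ≤ (U *ᵥ (Φ *ᵥ θstar)) i)) ∧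
    -- and optimal
    ((1 - γ) * (ν₀ ⬝ᵥ Vstar) ≤ (1 - γ) * (ν₀ ⬝ᵥ V)) := by
  obtain ⟨hγ0, hγ1⟩ := hγ
  have hbackup_le : (fun z => r z + γ * (Pm *ᵥ V) z) ≤ Φ *ᵥ θ := by
    rw [linearMDP_backup_eq_mulVec hlin hr] at hfeas2 ⊢
    exact mulVec_le_mulVec_of_exact_core hB_nonneg hcore hfeas2
  have hVle : Vstar ≤ V := le_of_bellman_supersolution hPm_nonneg hPm_sum hγ0.le hγ1 hQstar
    hVstar fun z => (hbackup_le z).trans (hfeas1 z)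
  have hQle : ∀ z, Qstar z ≤ (Φ *ᵥ θ) z := fun z =>
    calc Qstar z = r z + γ * (Pm *ᵥ Vstar) z := hQstar z
      _ ≤ r z + γ * (Pm *ᵥ V) z := by gcongr; exact mulVec_mono_of_nonneg hPm_nonneg hVle z
      _ ≤ (Φ *ᵥ θ) z := hbackup_le z
  have hθstar_backup : (fun z => r z + γ * (Pm *ᵥ Vstar) z) = Φ *ᵥ θstar := by
    rw [hθstar]
    exact funext fun z => (hQstar z).symm
  refine ⟨hVle, hQle, ⟨fun z => ?_, fun i => by rw [hθstar_backup]⟩, ?_⟩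
  · rw [hθstar, hVstar]
    exact le_sup' (fun a => Qstar (z.1, a)) (mem_univ z.2)
  · exact mul_le_mul_of_nonneg_left (dotProduct_le_dotProduct_of_nonneg_left hVle hν₀_nonneg)
      (by linarith)

/-- Under the exact core and linear MDP assumptions, any feasible point `(V, θ)`
of the relaxed dual LP satisfies `V ≥ V*` and `Φθ ≥ Q*`; in particular
`(V*, θ*)` with `Q* = Φθ*` is feasible and optimal for the relaxed dual LP. -/
theorem stmt12 {X A : Type*} [Fintype X] [Fintype A] [Nonempty A] {dd m : ℕ}
    (Φ : Matrix (X × A) (Fin dd) ℝ)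
    (U : Matrix (Fin m) (X × A) ℝ) (B : Matrix (X × A) (Fin m) ℝ)
    (hU_nonneg : ∀ i z, 0 ≤ U i z) (hU_sum : ∀ i, ∑ z, U i z = 1)
    (hB_nonneg : ∀ z i, 0 ≤ B z i) (hB_sum : ∀ z, ∑ i, B z i = 1)
    (hcore : B * U * Φ = Φ)
    (Pm : Matrix (X × A) X ℝ) (W : Matrix (Fin dd) X ℝ) (hlin : Pm = Φ * W)
    (hPm_nonneg : ∀ z x', 0 ≤ Pm z x') (hPm_sum : ∀ z, ∑ x', Pm z x' = 1)
    (ϑ : Fin dd → ℝ) (r : X × A → ℝ) (hr : r = Φ *ᵥ ϑ)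
    (γ : ℝ) (hγ : γ ∈ Set.Ioo (0 : ℝ) 1)
    (ν₀ : X → ℝ) (hν₀_nonneg : ∀ x, 0 ≤ ν₀ x)
    -- the optimal value functions, as fixed points of the Bellman optimality equations
    (Vstar : X → ℝ) (Qstar : X × A → ℝ)
    (hQstar : ∀ z, Qstar z = r z + γ * (Pm *ᵥ Vstar) z)
    (hVstar : ∀ x, Vstar x = Finset.univ.sup' Finset.univ_nonempty (fun a => Qstar (x, a)))
    (θstar : Fin dd → ℝ) (hθstar : Φ *ᵥ θstar = Qstar)
    -- a feasible point (V, θ) of the relaxed dual LP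
    (V : X → ℝ) (θ : Fin dd → ℝ)
    (hfeas1 : ∀ z : X × A, (Φ *ᵥ θ) z ≤ V z.1)
    (hfeas2 : ∀ i, (U *ᵥ fun z => r z + γ * (Pm *ᵥ V) z) i ≤ (U *ᵥ (Φ *ᵥ θ)) i) :
    (∀ x, Vstar x ≤ V x) ∧
    (∀ z, Qstar z ≤ (Φ *ᵥ θ) z) ∧
    -- (V*, θ*) is feasible
    ((∀ z : X × A, (Φ *ᵥ θstar) z ≤ Vstar z.1) ∧
      (∀ i, (U *ᵥ fun z => r z + γ * (Pm *ᵥ Vstar) z) i ≤ (U *ᵥ (Φ *ᵥ θstar)) i)) ∧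
    -- and optimal
    ((1 - γ) * (ν₀ ⬝ᵥ Vstar) ≤ (1 - γ) * (ν₀ ⬝ᵥ V)) :=
  stmt12_general Φ U B hB_nonneg hcore Pm W hlin hPm_nonneg hPm_sum ϑ r hr γ hγ ν₀ hν₀_nonneg Vstar
    Qstar hQstar hVstar θstar hθstar V θ hfeas1 hfeas2
end

section
/- With zero approximation errors (IBE = 0, ε_π = 0 for all policies, and Δ_core = 0), evaluating the Lagrangian at the comparator (λ*, μ*) = (B^T μ*, μ*) and any (θ_t, V_t) with V_t = M^{π_t}Φθ_t gives L(λ*, μ*; θ_t, V_t) = ⟨μ*, r⟩, the optimal return. -/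
/-!
Zero IBE makes `r + γPV_t − Φθ_t` lie in the column space of `Φ`, where `BUΦ = Φ` lets the
comparator `Bᵀμ*` act through `U` exactly as `μ*` does; the first term of the Lagrangian is
therefore `⟨μ*, r + γPV_t − Φθ_t⟩`. The flow constraint `Eᵀμ* = (1−γ)ν₀ + γPᵀμ*` turns
`⟨μ*, EV_t⟩` into `(1−γ)⟨ν₀, V_t⟩ + γ⟨μ*, PV_t⟩`, and everything but `⟨μ*, r⟩` cancels.
-/

open Matrix Finset

/-- The Lagrangian
`L(λ, u; θ, V) = ⟨λ, U(r + γPV − Φθ)⟩ + (1−γ)⟨ν₀, V⟩ + ⟨u, Φθ − EV⟩`. -/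
noncomputable def Lag {X A : Type*} [Fintype X] [Fintype A] {dd m : ℕ}
    (Φ : Matrix (X × A) (Fin dd) ℝ) (U : Matrix (Fin m) (X × A) ℝ)
    (Pm : Matrix (X × A) X ℝ) (r : X × A → ℝ) (ν₀ : X → ℝ) (γ : ℝ)
    (lam : Fin m → ℝ) (u : X × A → ℝ) (θ : Fin dd → ℝ) (V : X → ℝ) : ℝ :=
  lam ⬝ᵥ (U *ᵥ fun z => r z + γ * (Pm *ᵥ V) z - (Φ *ᵥ θ) z)
    + (1 - γ) * (ν₀ ⬝ᵥ V)
    + u ⬝ᵥ (fun z => (Φ *ᵥ θ) z - V z.1)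

section

variable {R ι κ : Type*} [CommSemiring R] [Fintype ι] [Fintype κ]

theorem transpose_mulVec_dotProduct_mulVec_of_mul_mul_eq {d : Type*} [Fintype d]
    {B : Matrix ι κ R} {U : Matrix κ ι R} {Φ : Matrix ι d R} (hcore : B * U * Φ = Φ)
    (μ : ι → R) {w : ι → R} (hw : w ∈ Set.range Φ.mulVec) :
    (Bᵀ *ᵥ μ) ⬝ᵥ (U *ᵥ w) = μ ⬝ᵥ w := by
  obtain ⟨θ, rfl⟩ := hw
  rw [mulVec_transpose, ← dotProduct_mulVec, mulVec_mulVec, mulVec_mulVec, hcore]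

theorem dotProduct_comp_fst {X A : Type*} [Fintype X] [Fintype A] (μ : X × A → R) (V : X → R) :
    μ ⬝ᵥ (fun z => V z.1) = (fun x => ∑ a, μ (x, a)) ⬝ᵥ V := by
  simp only [dotProduct, Fintype.sum_prod_type, Finset.sum_mul]

end

theorem dotProduct_comp_fst_of_flow {R X A : Type*} [CommRing R] [Fintype X] [Fintype A]
    {P : Matrix (X × A) X R} {ν₀ : X → R} {γ : R} {μ : X × A → R}
    (hflow : ∀ x, ∑ a, μ (x, a) = (1 - γ) * ν₀ x + γ * (Pᵀ *ᵥ μ) x) (V : X → R) :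
    μ ⬝ᵥ (fun z => V z.1) = (1 - γ) * (ν₀ ⬝ᵥ V) + γ * (μ ⬝ᵥ (P *ᵥ V)) := by
  have hmarg : (fun x => ∑ a, μ (x, a)) = (1 - γ) • ν₀ + γ • (Pᵀ *ᵥ μ) := funext hflow
  rw [dotProduct_comp_fst, hmarg, add_dotProduct, smul_dotProduct, smul_dotProduct,
    mulVec_transpose, ← dotProduct_mulVec, smul_eq_mul, smul_eq_mul]

theorem stmt14_general {X A : Type*} [Fintype X] [Fintype A] {dd m : ℕ}
    (Φ : Matrix (X × A) (Fin dd) ℝ)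
    (U : Matrix (Fin m) (X × A) ℝ) (B : Matrix (X × A) (Fin m) ℝ)
    (hcore : B * U * Φ = Φ)
    (Pm : Matrix (X × A) X ℝ) (r : X × A → ℝ) (ν₀ : X → ℝ)
    (γ : ℝ)
    -- μ* is the occupancy measure of an optimal policy
    (μstar : X × A → ℝ)
    (hμstar_flow : ∀ x, ∑ a, μstar (x, a) = (1 - γ) * ν₀ x + γ * (Pmᵀ *ᵥ μstar) x)
    (θt : Fin dd → ℝ) (Vt : X → ℝ)
    -- zero inherent Bellman error: r + γPV_t − Φθ_t is linearly representable
    (hIBE : ∃ θ' : Fin dd → ℝ,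
      Φ *ᵥ θ' = fun z => r z + γ * (Pm *ᵥ Vt) z - (Φ *ᵥ θt) z) :
    Lag Φ U Pm r ν₀ γ (Bᵀ *ᵥ μstar) μstar θt Vt = μstar ⬝ᵥ r := by
  have hres : (fun z => r z + γ * (Pm *ᵥ Vt) z - (Φ *ᵥ θt) z)
      = r + γ • (Pm *ᵥ Vt) - Φ *ᵥ θt := rfl
  have hgap : (fun z => (Φ *ᵥ θt) z - Vt z.1) = Φ *ᵥ θt - fun z => Vt z.1 := rfl
  unfold Lag
  rw [transpose_mulVec_dotProduct_mulVec_of_mul_mul_eq hcore μstar hIBE, hres, hgap,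
    dotProduct_sub, dotProduct_sub, dotProduct_comp_fst_of_flow hμstar_flow, dotProduct_add,
    dotProduct_smul, smul_eq_mul]
  ring

/-- With zero approximation errors (`Δ_core = 0` i.e. `BUΦ = Φ`, and zero IBE so
that `r + γPV_t − Q_t` is exactly linearly representable), evaluating the
Lagrangian at the comparator `(B^T μ*, μ*)` gives the optimal return `⟨μ*, r⟩`. -/
theorem stmt14 {X A : Type*} [Fintype X] [Fintype A] {dd m : ℕ}
    (Φ : Matrix (X × A) (Fin dd) ℝ)
    (U : Matrix (Fin m) (X × A) ℝ) (B : Matrix (X × A) (Fin m) ℝ)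
    (hU_nonneg : ∀ i z, 0 ≤ U i z) (hU_sum : ∀ i, ∑ z, U i z = 1)
    (hB_nonneg : ∀ z i, 0 ≤ B z i) (hB_sum : ∀ z, ∑ i, B z i = 1)
    (hcore : B * U * Φ = Φ)
    (Pm : Matrix (X × A) X ℝ) (r : X × A → ℝ) (ν₀ : X → ℝ)
    (γ : ℝ) (hγ : γ ∈ Set.Ioo (0 : ℝ) 1)
    -- μ* is the occupancy measure of an optimal policy
    (μstar : X × A → ℝ) (hμstar_nonneg : ∀ z, 0 ≤ μstar z)
    (hμstar_flow : ∀ x, ∑ a, μstar (x, a) = (1 - γ) * ν₀ x + γ * (Pmᵀ *ᵥ μstar) x)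
    (θt : Fin dd → ℝ) (Vt : X → ℝ)
    -- zero inherent Bellman error: r + γPV_t − Φθ_t is linearly representable
    (hIBE : ∃ θ' : Fin dd → ℝ,
      Φ *ᵥ θ' = fun z => r z + γ * (Pm *ᵥ Vt) z - (Φ *ᵥ θt) z) :
    Lag Φ U Pm r ν₀ γ (Bᵀ *ᵥ μstar) μstar θt Vt = μstar ⬝ᵥ r :=
  stmt14_general Φ U B hcore Pm r ν₀ γ μstar hμstar_flow θt Vt hIBE
end
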